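/- arXiv:1302.5216 — 2 statements merged into one kernel-verified Lean document; each statement's English description precedes it below -/
import Mathlib

section
/- Let (∂,σ) be a free upper triangular right twisted multi-derivation on A whose associated FODC extends to the n-dimensional differential calculus Ω = Λ^Q(Ω¹). For 0 ≤ m ≤ n, the maps Θₘ: Ωᵐ → Hom_A(Ω^{n−m}, A), Θₘ(v) = (−1)^{m(n−1)} β v (where β is the right dual basis of the top form ω̄ and (βv)(w) = β(v∧w)), are isomorphisms of right A-modules. -/
/-- The ordered wedge monomial `ω_{i₁} ∧ ⋯ ∧ ω_{i_k}` for `s = {i₁ < ⋯ < i_k}`. -/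
def wedgeProd {L : Type} [Monoid L] {n : ℕ} (w : Fin n → L) (s : Finset (Fin n)) : L :=
  ((s.sort (· ≤ ·)).map w).prod

/-- The degree-`m` component `Ωᵐ` of `Λ^Q(Ω¹)`, as a `K`-subspace of `L` (it is
spanned by the elements `a · ω_{i₁} ∧ ⋯ ∧ ω_{i_m} · b`, equivalently by the
`ω_{i₁} ∧ ⋯ ∧ ω_{i_m} · a` since `Ω` is free as a right `A`-module). -/
def omegaDeg {K A L : Type} [Field K] [Ring A] [Algebra K A] [Ring L] [Algebra K L]
    {n : ℕ} (ι : A →ₐ[K] L) (w : Fin n → L) (m : ℕ) : Submodule K L :=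
  Submodule.span K
    {x : L | ∃ (s : Finset (Fin n)) (a : A), s.card = m ∧ x = wedgeProd w s * ι a}

/-!
Ordered monomials multiply like an exterior algebra up to nonzero scalars: `ω_s ω_t = 0` unless
`s` and `t` are disjoint, and `ω_s ω_{sᶜ} = c_s ω̄` with `c_s ≠ 0`. Upper triangularity of `σ`
makes the top form normal, `a ω̄ = ω̄ τ(a)` with `τ` inverse to the composite of the `σᵢᵢ`.
Hence `β((∑ b_s ω_s)(ω_t a)) = c_{tᶜ} τ(b_{tᶜ}) a`: the pairing `Ωᵐ × Ω^{n-m} → A` is diagonal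
with invertible entries, so a right `A`-linear `f` on `Ω^{n-m}` is `Θₘ(v)` exactly when the
coefficients of `v` are `b_s = τ⁻¹((ε c_s)⁻¹ f(ω_{sᶜ}))`, `ε` being the sign in `Θₘ`.
-/

section QuantumRelations

variable {K L : Type} [Field K] [Ring L] [Algebra K L] {n : ℕ}
  {q : Fin n → Fin n → K} {w : Fin n → L}

theorem mul_eq_neg_smul_mul_swap (hanti : ∀ i j : Fin n, w i * w j + q i j • (w j * w i) = 0)
    (i j : Fin n) : w i * w j = -q i j • (w j * w i) := by
  linear_combination (norm := module) hanti i j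

theorem mul_prod_map_eq_zero_of_mem
    (hanti : ∀ i j : Fin n, w i * w j + q i j • (w j * w i) = 0)
    (hsq : ∀ i : Fin n, w i * w i = 0) {j : Fin n} {l : List (Fin n)} (hj : j ∈ l) :
    w j * (l.map w).prod = 0 := by
  induction l with
  | nil => simp at hj
  | cons k l ih =>
    rw [List.map_cons, List.prod_cons, ← mul_assoc]
    rcases List.mem_cons.mp hj with rfl | hjl
    · rw [hsq, zero_mul]
    · rw [mul_eq_neg_smul_mul_swap hanti, smul_mul_assoc, mul_assoc, ih hjl, mul_zero, smul_zero]

theorem prod_map_eq_zero_of_not_nodup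
    (hanti : ∀ i j : Fin n, w i * w j + q i j • (w j * w i) = 0)
    (hsq : ∀ i : Fin n, w i * w i = 0) {l : List (Fin n)} (hl : ¬ l.Nodup) :
    (l.map w).prod = 0 := by
  induction l with
  | nil => simp at hl
  | cons k l ih =>
    rw [List.map_cons, List.prod_cons]
    by_cases hk : k ∈ l
    · exact mul_prod_map_eq_zero_of_mem hanti hsq hk
    · rw [ih (fun hnd => hl (List.nodup_cons.mpr ⟨hk, hnd⟩)), mul_zero]

theorem exists_prod_map_eq_smul_of_perm (hQanti : ∀ i j, q i j * q j i = 1)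
    (hanti : ∀ i j : Fin n, w i * w j + q i j • (w j * w i) = 0)
    {l₁ l₂ : List (Fin n)} (h : l₁.Perm l₂) :
    ∃ c : K, c ≠ 0 ∧ (l₁.map w).prod = c • (l₂.map w).prod := by
  induction h with
  | nil => exact ⟨1, one_ne_zero, (one_smul K _).symm⟩
  | cons x _ ih =>
    obtain ⟨c, hc, he⟩ := ih
    exact ⟨c, hc, by simp only [List.map_cons, List.prod_cons, he, mul_smul_comm]⟩
  | swap x y l =>
    refine ⟨-q y x, neg_ne_zero.mpr (left_ne_zero_of_mul_eq_one (hQanti y x)), ?_⟩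
    simp only [List.map_cons, List.prod_cons, ← mul_assoc, mul_eq_neg_smul_mul_swap hanti y x,
      smul_mul_assoc]
  | trans _ _ ih₁ ih₂ =>
    obtain ⟨c₁, hc₁, e₁⟩ := ih₁
    obtain ⟨c₂, hc₂, e₂⟩ := ih₂
    exact ⟨c₁ * c₂, mul_ne_zero hc₁ hc₂, by rw [e₁, e₂, smul_smul]⟩

theorem wedgeProd_mul_wedgeProd_of_not_disjoint
    (hanti : ∀ i j : Fin n, w i * w j + q i j • (w j * w i) = 0)
    (hsq : ∀ i : Fin n, w i * w i = 0) {s t : Finset (Fin n)} (h : ¬ Disjoint s t) :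
    wedgeProd w s * wedgeProd w t = 0 := by
  obtain ⟨j, hjs, hjt⟩ := Finset.not_disjoint_iff.mp h
  rw [wedgeProd, wedgeProd, ← List.prod_append, ← List.map_append]
  refine prod_map_eq_zero_of_not_nodup hanti hsq fun hnd => ?_
  exact List.disjoint_of_nodup_append hnd ((Finset.mem_sort _).mpr hjs)
    ((Finset.mem_sort _).mpr hjt)

theorem exists_wedgeProd_mul_wedgeProd_compl (hQanti : ∀ i j, q i j * q j i = 1)
    (hanti : ∀ i j : Fin n, w i * w j + q i j • (w j * w i) = 0) (s : Finset (Fin n)) :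
    ∃ c : K, c ≠ 0 ∧ wedgeProd w s * wedgeProd w sᶜ = c • wedgeProd w Finset.univ := by
  have hperm : (s.sort (· ≤ ·) ++ sᶜ.sort (· ≤ ·)).Perm (Finset.univ.sort (· ≤ ·)) := by
    rw [← Multiset.coe_eq_coe, ← Multiset.coe_add, Finset.sort_eq, Finset.sort_eq,
      Finset.sort_eq, ← Finset.union_compl s, ← Finset.disjUnion_eq_union s sᶜ disjoint_compl_right,
      Finset.disjUnion_val]
  rw [wedgeProd, wedgeProd, ← List.prod_append, ← List.map_append]
  exact exists_prod_map_eq_smul_of_perm hQanti hanti hperm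

end QuantumRelations

section Twist

variable {K A L : Type} [Field K] [Ring A] [Algebra K A] [Ring L] [Algebra K L] {n : ℕ}
  {q : Fin n → Fin n → K} {w : Fin n → L} {ι : A →ₐ[K] L} {σ : A →ₐ[K] Matrix (Fin n) (Fin n) A}

theorem exists_equiv_prod_map_mul
    (htri : ∀ (a : A) (i j : Fin n), j < i → σ a i j = 0)
    (hdiag : ∀ i : Fin n, Function.Bijective (fun a : A => σ a i i))
    (hcomm : ∀ (a : A) (i : Fin n), w i * ι a = ∑ j, ι (σ a i j) * w j)
    (hanti : ∀ i j : Fin n, w i * w j + q i j • (w j * w i) = 0)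
    (hsq : ∀ i : Fin n, w i * w i = 0) {l : List (Fin n)} (hsorted : l.Pairwise (· < ·))
    (hupper : ∀ x ∈ l, ∀ j, x < j → j ∈ l) :
    ∃ τ : A ≃ A, ∀ a, (l.map w).prod * ι a = ι (τ a) * (l.map w).prod := by
  induction l with
  | nil => exact ⟨Equiv.refl A, by simp⟩
  | cons i l ih =>
    obtain ⟨hi, hsorted⟩ := List.pairwise_cons.mp hsorted
    have hupper_tail : ∀ j, i < j → j ∈ l := fun j hij =>
      (List.mem_cons.mp (hupper i List.mem_cons_self j hij)).resolve_left hij.ne'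
    obtain ⟨τ, hτ⟩ := ih hsorted fun x hx j hxj => hupper_tail j ((hi x hx).trans hxj)
    refine ⟨τ.trans (Equiv.ofBijective _ (hdiag i)), fun a => ?_⟩
    have hterm : ∀ j ≠ i, ι (σ (τ a) i j) * w j * (l.map w).prod = 0 := by
      intro j hji
      rcases lt_or_gt_of_ne hji with hlt | hgt
      · rw [htri _ i j hlt, map_zero, zero_mul, zero_mul]
      · rw [mul_assoc, mul_prod_map_eq_zero_of_mem hanti hsq (hupper_tail j hgt), mul_zero]
    calc w i * (l.map w).prod * ι a = w i * ι (τ a) * (l.map w).prod := by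
          rw [mul_assoc, hτ, ← mul_assoc]
      _ = ι (σ (τ a) i i) * w i * (l.map w).prod := by
          rw [hcomm, Finset.sum_mul, Finset.sum_eq_single i (fun j _ => hterm j) (by simp)]
      _ = ι ((τ.trans (Equiv.ofBijective _ (hdiag i))) a) * (w i * (l.map w).prod) :=
          mul_assoc _ _ _

theorem exists_equiv_mul_wedgeProd_univ
    (htri : ∀ (a : A) (i j : Fin n), j < i → σ a i j = 0)
    (hdiag : ∀ i : Fin n, Function.Bijective (fun a : A => σ a i i))
    (hcomm : ∀ (a : A) (i : Fin n), w i * ι a = ∑ j, ι (σ a i j) * w j)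
    (hanti : ∀ i j : Fin n, w i * w j + q i j • (w j * w i) = 0)
    (hsq : ∀ i : Fin n, w i * w i = 0) :
    ∃ τ : A ≃ A, ∀ a, ι a * wedgeProd w Finset.univ = wedgeProd w Finset.univ * ι (τ a) := by
  obtain ⟨τ, hτ⟩ := exists_equiv_prod_map_mul htri hdiag hcomm hanti hsq
    (Finset.sortedLT_sort Finset.univ).pairwise
    (fun _ _ j _ => (Finset.mem_sort _).mpr (Finset.mem_univ j))
  exact ⟨τ.symm, fun a => by rw [wedgeProd, hτ, Equiv.apply_symm_apply]⟩

end Twist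

section Pairing

variable {K A L : Type} [Field K] [Ring A] [Algebra K A] [Ring L] [Algebra K L] {n : ℕ}
  {ι : A →ₐ[K] L} {w : Fin n → L}

def leftOmegaDeg (ι : A →ₐ[K] L) (w : Fin n → L) (m : ℕ) : Submodule K L :=
  Submodule.span K {x : L | ∃ (a : A) (s : Finset (Fin n)), s.card = m ∧ x = ι a * wedgeProd w s}

theorem sum_mem_leftOmegaDeg (m : ℕ) (b : Finset (Fin n) → A) :
    ∑ s ∈ Finset.univ.powersetCard m, ι (b s) * wedgeProd w s ∈ leftOmegaDeg ι w m :=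
  Submodule.sum_mem _ fun s hs =>
    Submodule.subset_span ⟨b s, s, (Finset.mem_powersetCard.mp hs).2, rfl⟩

theorem exists_eq_sum_of_mem_leftOmegaDeg {m : ℕ} {u : L} (hu : u ∈ leftOmegaDeg ι w m) :
    ∃ b : Finset (Fin n) → A, u = ∑ s ∈ Finset.univ.powersetCard m, ι (b s) * wedgeProd w s := by
  classical
  induction hu using Submodule.span_induction with
  | mem x hx =>
    obtain ⟨a, s, hs, rfl⟩ := hx
    refine ⟨Pi.single s a, ?_⟩
    rw [Finset.sum_eq_single_of_mem s (by simp [hs])]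
    · simp
    · intro t _ hts
      simp [hts]
  | zero => exact ⟨0, by simp⟩
  | add x y _ _ hx hy =>
    obtain ⟨b₁, rfl⟩ := hx
    obtain ⟨b₂, rfl⟩ := hy
    exact ⟨b₁ + b₂, by simp only [Pi.add_apply, map_add, add_mul, Finset.sum_add_distrib]⟩
  | smul k x _ hx =>
    obtain ⟨b, rfl⟩ := hx
    exact ⟨k • b, by simp only [Finset.smul_sum, Pi.smul_apply, map_smul, smul_mul_assoc]⟩

theorem apply_sum_mul_wedgeProd_mul (β : L →ₗ[K] A)
    (hβ : ∀ a : A, β (wedgeProd w Finset.univ * ι a) = a) (τ : A ≃ A)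
    (hτ : ∀ a, ι a * wedgeProd w Finset.univ = wedgeProd w Finset.univ * ι (τ a))
    (c : Finset (Fin n) → K)
    (hc : ∀ s, wedgeProd w s * wedgeProd w sᶜ = c s • wedgeProd w Finset.univ)
    (hzero : ∀ s t, ¬ Disjoint s t → wedgeProd w s * wedgeProd w t = 0)
    {m : ℕ} (b : Finset (Fin n) → A) {t : Finset (Fin n)} (ht : tᶜ.card = m) (a : A) :
    β ((∑ s ∈ Finset.univ.powersetCard m, ι (b s) * wedgeProd w s) * (wedgeProd w t * ι a))
      = c tᶜ • (τ (b tᶜ) * a) := by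
  have hother : ∀ s ∈ Finset.univ.powersetCard m, s ≠ tᶜ →
      ι (b s) * wedgeProd w s * (wedgeProd w t * ι a) = 0 := by
    intro s hs hst
    have hdisj : ¬ Disjoint s t := fun hd => hst <| Finset.eq_of_subset_of_card_le
      (Finset.subset_compl_iff_disjoint_right.mpr hd)
      (by rw [ht, (Finset.mem_powersetCard.mp hs).2])
    rw [mul_assoc, ← mul_assoc (wedgeProd w s), hzero s t hdisj, zero_mul, mul_zero]
  have hmain : ι (b tᶜ) * wedgeProd w tᶜ * (wedgeProd w t * ι a)
      = c tᶜ • (wedgeProd w Finset.univ * ι (τ (b tᶜ) * a)) := by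
    calc ι (b tᶜ) * wedgeProd w tᶜ * (wedgeProd w t * ι a)
        = ι (b tᶜ) * (wedgeProd w tᶜ * wedgeProd w tᶜᶜ) * ι a := by
          rw [compl_compl, mul_assoc, mul_assoc, mul_assoc]
      _ = c tᶜ • (wedgeProd w Finset.univ * ι (τ (b tᶜ) * a)) := by
          rw [hc, mul_smul_comm, smul_mul_assoc, hτ, map_mul, mul_assoc]
  rw [Finset.sum_mul, Finset.sum_eq_single_of_mem tᶜ (by simp [ht]) hother, hmain, map_smul, hβ]

end Pairing

section Theta

variable {K A L : Type} [Field K] [Ring A] [Algebra K A] [Ring L] [Algebra K L] {n : ℕ}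
  {ι : A →ₐ[K] L} {w : Fin n → L}

theorem existsUnique_mem_leftOmegaDeg_of_pairing (β : L →ₗ[K] A)
    (hβ : ∀ a : A, β (wedgeProd w Finset.univ * ι a) = a) (τ : A ≃ A)
    (hτ : ∀ a, ι a * wedgeProd w Finset.univ = wedgeProd w Finset.univ * ι (τ a))
    (c : Finset (Fin n) → K) (hc0 : ∀ s, c s ≠ 0)
    (hc : ∀ s, wedgeProd w s * wedgeProd w sᶜ = c s • wedgeProd w Finset.univ)
    (hzero : ∀ s t, ¬ Disjoint s t → wedgeProd w s * wedgeProd w t = 0)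
    {m : ℕ} (hm : m ≤ n) {ε : K} (hε : ε ≠ 0) (f : L →ₗ[K] A)
    (hf : ∀ (s : Finset (Fin n)) (a : A), s.card = n - m →
      f (wedgeProd w s * ι a) = f (wedgeProd w s) * a) :
    ∃! v : L, v ∈ leftOmegaDeg ι w m ∧ ∀ x ∈ omegaDeg ι w (n - m), f x = ε • β (v * x) := by
  have hcompl : ∀ t : Finset (Fin n), t.card = n - m ↔ tᶜ.card = m := fun t => by
    have := t.card_le_univ
    rw [Finset.card_compl, Fintype.card_fin] at *; omega
  have hpair := apply_sum_mul_wedgeProd_mul β hβ τ hτ c hc hzero (m := m)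
  set b : Finset (Fin n) → A := fun s => τ.symm ((ε * c s)⁻¹ • f (wedgeProd w sᶜ))
  refine ⟨_, ⟨sum_mem_leftOmegaDeg m b, fun x hx => ?_⟩, ?_⟩
  · refine LinearMap.eqOn_span' (g := ε • β ∘ₗ LinearMap.mulLeft K _) ?_ hx
    rintro _ ⟨t, a, ht, rfl⟩
    simp only [LinearMap.smul_apply, LinearMap.comp_apply, LinearMap.mulLeft_apply,
      hpair b ((hcompl t).mp ht), b, Equiv.apply_symm_apply, compl_compl, hf t a ht,
      smul_mul_assoc, smul_smul]
    rw [← mul_assoc, mul_inv_cancel₀ (mul_ne_zero hε (hc0 _)), one_smul]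
  · rintro v ⟨hv, hfv⟩
    obtain ⟨b', rfl⟩ := exists_eq_sum_of_mem_leftOmegaDeg hv
    refine Finset.sum_congr rfl fun s hs => ?_
    have hs : sᶜᶜ.card = m := by simpa using (Finset.mem_powersetCard.mp hs).2
    have hfs := hfv (wedgeProd w sᶜ * ι 1) (Submodule.subset_span ⟨sᶜ, 1, (hcompl _).mpr hs, rfl⟩)
    rw [hpair b' hs, compl_compl, mul_one, map_one, mul_one, smul_smul] at hfs
    suffices b' s = b s by rw [this]
    simp only [b, hfs, inv_smul_smul₀ (mul_ne_zero hε (hc0 s)), Equiv.symm_apply_apply]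

end Theta

theorem quantumExterior_Theta_iso_general {K A L : Type}
    [Field K] [Ring A] [Algebra K A] [Ring L] [Algebra K L]
    {n : ℕ} (q : Fin n → Fin n → K)
    (hQanti : ∀ i j, q i j * q j i = 1)
    (ι : A →ₐ[K] L) (w : Fin n → L)
    (σ : A →ₐ[K] Matrix (Fin n) (Fin n) A)
    -- upper triangular with the diagonal entries automorphisms:
    (htri : ∀ (a : A) (i j : Fin n), j < i → σ a i j = 0)
    (hdiag : ∀ i : Fin n, Function.Bijective (fun a : A => σ a i i))
    -- the bimodule relation `ωᵢ a = Σⱼ σᵢⱼ(a) ωⱼ`: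
    (hcomm : ∀ (a : A) (i : Fin n), w i * ι a = ∑ j, ι (σ a i j) * w j)
    -- the quantum exterior relations:
    (hanti : ∀ i j : Fin n, w i * w j + q i j • (w j * w i) = 0)
    (hsq : ∀ i : Fin n, w i * w i = 0)
    -- `β`, the right dual basis of `ω̄ = ω₁ ∧ ⋯ ∧ ωₙ`: `β(ω̄ a) = a`:
    (β : L →ₗ[K] A)
    (hβ : ∀ a : A, β (wedgeProd w Finset.univ * ι a) = a)
    (m : ℕ) (hm : m ≤ n) :
    ∀ f : L →ₗ[K] A,
      -- `f` restricts to a right `A`-linear map `Ω^{n-m} → A`: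
      (∀ (s : Finset (Fin n)) (a : A), s.card = n - m →
        f (wedgeProd w s * ι a) = f (wedgeProd w s) * a) →
      -- there is a unique `v ∈ Ωᵐ` with `Θₘ(v) = f` on `Ω^{n-m}`:
      ∃! v : L,
        v ∈ Submodule.span K
            {x : L | ∃ (a : A) (s : Finset (Fin n)), s.card = m ∧ x = ι a * wedgeProd w s} ∧
        ∀ x ∈ omegaDeg ι w (n - m), f x = ((-1 : K) ^ (m * (n - 1))) • β (v * x) := by
  intro f hf
  obtain ⟨τ, hτ⟩ := exists_equiv_mul_wedgeProd_univ htri hdiag hcomm hanti hsq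
  choose c hc0 hc using exists_wedgeProd_mul_wedgeProd_compl hQanti hanti
  exact existsUnique_mem_leftOmegaDeg_of_pairing β hβ τ hτ c hc0 hc
    (fun _ _ => wedgeProd_mul_wedgeProd_of_not_disjoint hanti hsq) hm
    (pow_ne_zero _ (neg_ne_zero.mpr one_ne_zero)) f hf

/-- For a free upper triangular right twisted multi-derivation
`(∂,σ)` whose FODC extends to `Ω = Λ^Q(Ω¹)`, the maps
`Θₘ : Ωᵐ → Hom_A(Ω^{n-m}, A)`, `Θₘ(v) = (-1)^{m(n-1)} β v` (with `β` the right
dual basis of the top form `ω̄`, and `(βv)(x) = β(v ∧ x)`) are isomorphisms of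
right `A`-modules.  Bijectivity is expressed by: every right `A`-linear
functional `f` on `Ω^{n-m}` comes from a unique `v ∈ Ωᵐ` (here `Ωᵐ` is spanned
by the `a · ω_{i₁}∧⋯∧ω_{i_m}`). -/
theorem quantumExterior_Theta_iso {K A L : Type}
    [Field K] [Ring A] [Algebra K A] [Ring L] [Algebra K L]
    {n : ℕ} (q : Fin n → Fin n → K)
    (hQanti : ∀ i j, q i j * q j i = 1) (hQdiag : ∀ i, q i i = 1)
    (ι : A →ₐ[K] L) (w : Fin n → L)
    (σ : A →ₐ[K] Matrix (Fin n) (Fin n) A)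
    -- upper triangular with the diagonal entries automorphisms:
    (htri : ∀ (a : A) (i j : Fin n), j < i → σ a i j = 0)
    (hdiag : ∀ i : Fin n, Function.Bijective (fun a : A => σ a i i))
    -- the bimodule relation `ωᵢ a = Σⱼ σᵢⱼ(a) ωⱼ`:
    (hcomm : ∀ (a : A) (i : Fin n), w i * ι a = ∑ j, ι (σ a i j) * w j)
    -- the quantum exterior relations:
    (hanti : ∀ i j : Fin n, w i * w j + q i j • (w j * w i) = 0)
    (hsq : ∀ i : Fin n, w i * w i = 0)
    -- `Ω` is a free right `A`-module with basis the ordered wedge monomials: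
    (hbasis : ∀ x : L, ∃! c : Finset (Fin n) → A,
        x = ∑ s : Finset (Fin n), wedgeProd w s * ι (c s))
    -- `β`, the right dual basis of `ω̄ = ω₁ ∧ ⋯ ∧ ωₙ`: `β(ω̄ a) = a`:
    (β : L →ₗ[K] A)
    (hβ : ∀ a : A, β (wedgeProd w Finset.univ * ι a) = a)
    (m : ℕ) (hm : m ≤ n) :
    ∀ f : L →ₗ[K] A,
      -- `f` restricts to a right `A`-linear map `Ω^{n-m} → A`:
      (∀ (s : Finset (Fin n)) (a : A), s.card = n - m →
        f (wedgeProd w s * ι a) = f (wedgeProd w s) * a) →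
      -- there is a unique `v ∈ Ωᵐ` with `Θₘ(v) = f` on `Ω^{n-m}`:
      ∃! v : L,
        v ∈ Submodule.span K
            {x : L | ∃ (a : A) (s : Finset (Fin n)), s.card = m ∧ x = ι a * wedgeProd w s} ∧
        ∀ x ∈ omegaDeg ι w (n - m), f x = ((-1 : K) ^ (m * (n - 1))) • β (v * x) :=
  quantumExterior_Theta_iso_general q hQanti ι w σ htri hdiag hcomm hanti hsq β hβ m hm
end

section
/- With the two-parameter differential structure on Manin's quantum n-space, for all i < j the identity ∂ᵢσᵢⱼ − pq⁻¹∂ⱼσᵢᵢ = pq⁻¹σᵢⱼ∂ᵢ − σᵢᵢ∂ⱼ holds; in fact both sides applied to x^α equal −(q⁻¹/(p−1)) ηᵢⱼ(α) πᵢ(α) λᵢ(α) x^{α−εʲ}. -/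
/-!
Each of the composites `∂ᵢσᵢⱼ`, `∂ⱼσᵢᵢ`, `σᵢⱼ∂ᵢ`, `σᵢᵢ∂ⱼ` sends `x^α` to a multiple of `x^{α-εʲ}`:
the common factor `ηᵢⱼ(α)πᵢ(α)λᵢ(α)` times `q⁻¹[αᵢ+1]_p`, `p^{αᵢ}/(p-1)`, `p⁻¹[αᵢ]_p` and
`q⁻¹p^{αᵢ}/(p-1)` respectively, where `[m]_p = (pᵐ-1)/(p-1)`. The factors `p⁻¹`, `q⁻¹` come from
the shifts of `π`, `λ`, `λ̄` when the exponent moves by `εⁱ` or `εʲ`. Both sides of the relation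
then reduce, with `m = αᵢ`, to `[m+1]_p - p·pᵐ/(p-1) = [m]_p - pᵐ/(p-1) = -1/(p-1)`, and the
operator identity follows because the monomials span `A`.
-/

/-- The ordered monomial `x^α = x₁^{α₁} ⋯ xₙ^{αₙ}`. -/
def xpow {A : Type} [Monoid A] {n : ℕ} (X : Fin n → A) (α : Fin n → ℕ) : A :=
  (List.ofFn fun i => X i ^ α i).prod

/-- `πᵢ(α) = ∏_{s < i} p^{αₛ}`. -/
def piManin {K : Type} [Field K] {n : ℕ} (p : K) (i : Fin n) (α : Fin n → ℕ) : K :=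
  ∏ s ∈ Finset.univ.filter (· < i), p ^ α s

/-- `λᵢ(α) = ∏_{j > i} q^{αⱼ}`. -/
def lamManin {K : Type} [Field K] {n : ℕ} (q : K) (i : Fin n) (α : Fin n → ℕ) : K :=
  ∏ j ∈ Finset.univ.filter (i < ·), q ^ α j

/-- `λ̄ᵢ(α) = ∏_{j < i} q^{-αⱼ}`. -/
def lambarManin {K : Type} [Field K] {n : ℕ} (q : K) (i : Fin n) (α : Fin n → ℕ) : K :=
  ∏ j ∈ Finset.univ.filter (· < i), q⁻¹ ^ α j

/-- The value `σᵢⱼ(x^α)` of the upper triangular matrix `σ` on Manin's quantum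
`n`-space. -/
def sigmaManin {K A : Type} [Field K] [Ring A] [Algebra K A] {n : ℕ}
    (p q : K) (X : Fin n → A) (i j : Fin n) (α : Fin n → ℕ) : A :=
  if i = j then
    (piManin p i α * lambarManin q i α * lamManin q i α * p ^ α i) • xpow X α
  else if i < j then
    (piManin p j α * lambarManin q i α * lamManin q j α * (p ^ α j - 1)) •
      xpow X (α + Pi.single i 1 - Pi.single j 1)
  else 0


/-- `ηᵢⱼ(α) = πⱼ(α)λ̄ᵢ(α)λⱼ(α)(p^{αⱼ}-1)` for `i < j` (the off-diagonal scalar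
of `σᵢⱼ`). -/
def etaManin {K : Type} [Field K] {n : ℕ} (p q : K) (i j : Fin n)
    (α : Fin n → ℕ) : K :=
  piManin p j α * lambarManin q i α * lamManin q j α * (p ^ α j - 1)

section ShiftLemmas

variable {ι : Type*} [DecidableEq ι]

lemma Finset.prod_pow_add_single {M : Type*} [CommMonoid M] (c : M) (α : ι → ℕ) (k : ι)
    (S : Finset ι) :
    ∏ s ∈ S, c ^ (α + Pi.single k 1 : ι → ℕ) s =
      (∏ s ∈ S, c ^ α s) * if k ∈ S then c else 1 := by
  simp only [Pi.add_apply, pow_add, Finset.prod_mul_distrib, Pi.single_apply, pow_ite,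
    pow_one, pow_zero, Finset.prod_ite_eq']

lemma exists_eq_add_single_of_ne_zero {α : ι → ℕ} {k : ι} (h : α k ≠ 0) :
    ∃ δ : ι → ℕ, α = δ + Pi.single k 1 := by
  refine ⟨α - Pi.single k 1, funext fun s => ?_⟩
  rcases eq_or_ne s k with rfl | hs
  · simp only [Pi.add_apply, Pi.sub_apply, Pi.single_eq_same]; omega
  · simp [Pi.single_eq_of_ne hs]

end ShiftLemmas

section Coefficients

variable {K : Type} [Field K] {n : ℕ}

lemma piManin_add_single (p : K) (l k : Fin n) (α : Fin n → ℕ) :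
    piManin p l (α + Pi.single k 1) = piManin p l α * if k < l then p else 1 := by
  rw [piManin, piManin, Finset.prod_pow_add_single]
  simp

lemma lamManin_add_single (q : K) (l k : Fin n) (α : Fin n → ℕ) :
    lamManin q l (α + Pi.single k 1) = lamManin q l α * if l < k then q else 1 := by
  rw [lamManin, lamManin, Finset.prod_pow_add_single]
  simp

lemma lambarManin_add_single (q : K) (l k : Fin n) (α : Fin n → ℕ) :
    lambarManin q l (α + Pi.single k 1) = lambarManin q l α * if k < l then q⁻¹ else 1 := by
  rw [lambarManin, lambarManin, Finset.prod_pow_add_single]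
  simp

end Coefficients

section Compositions

variable {K A : Type} [Field K] [Ring A] [Algebra K A] {n : ℕ}

def IsManinPartial (p q : K) (X : Fin n → A) (par : Fin n → (A →ₗ[K] A)) : Prop :=
  ∀ l α, par l (xpow X α) =
    (piManin p l α * lamManin q l α * ((p ^ α l - 1) / (p - 1))) • xpow X (α - Pi.single l 1)

def IsManinSigma (p q : K) (X : Fin n → A) (σ : Fin n → Fin n → (A →ₗ[K] A)) : Prop :=
  ∀ i j α, σ i j (xpow X α) = sigmaManin p q X i j α

variable {p q : K} {X : Fin n → A} {par : Fin n → (A →ₗ[K] A)}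
  {σ : Fin n → Fin n → (A →ₗ[K] A)} {i j : Fin n}

lemma sigma_of_lt (hσ : IsManinSigma p q X σ) (hij : i < j) (α : Fin n → ℕ) :
    σ i j (xpow X α) = etaManin p q i j α • xpow X (α + Pi.single i 1 - Pi.single j 1) := by
  rw [hσ, sigmaManin, if_neg hij.ne, if_pos hij, etaManin]

lemma sigma_self (hσ : IsManinSigma p q X σ) (α : Fin n → ℕ) :
    σ i i (xpow X α) =
      (piManin p i α * lambarManin q i α * lamManin q i α * p ^ α i) • xpow X α := by
  rw [hσ, sigmaManin, if_pos rfl]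

lemma partial_sigma_of_lt (hpar : IsManinPartial p q X par) (hσ : IsManinSigma p q X σ)
    (hq : q ≠ 0) (hij : i < j) (α : Fin n → ℕ) :
    par i (σ i j (xpow X α)) =
      (q⁻¹ * ((p ^ (α i + 1) - 1) / (p - 1)) * etaManin p q i j α * piManin p i α *
        lamManin q i α) • xpow X (α - Pi.single j 1) := by
  rw [sigma_of_lt hσ hij, map_smul, hpar, smul_smul, tsub_right_comm, add_tsub_cancel_right]
  congr 1
  by_cases hj : α j = 0
  · simp [etaManin, hj]
  obtain ⟨δ, rfl⟩ := exists_eq_add_single_of_ne_zero hj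
  rw [add_right_comm, add_tsub_cancel_right]
  simp only [etaManin, piManin_add_single, lamManin_add_single, lambarManin_add_single,
    Pi.add_apply, Pi.single_eq_same, add_zero, Pi.single_eq_of_ne hij.ne, if_pos hij,
    if_neg hij.not_gt, lt_irrefl, if_false]
  field_simp

lemma partial_sigma_self (hpar : IsManinPartial p q X par) (hσ : IsManinSigma p q X σ)
    (α : Fin n → ℕ) :
    par j (σ i i (xpow X α)) =
      (p ^ α i / (p - 1) * etaManin p q i j α * piManin p i α * lamManin q i α) •
        xpow X (α - Pi.single j 1) := by
  rw [sigma_self hσ, map_smul, hpar, smul_smul, etaManin]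
  congr 1
  ring

lemma sigma_partial_of_lt (hpar : IsManinPartial p q X par) (hσ : IsManinSigma p q X σ)
    (hp : p ≠ 0) (hij : i < j) (α : Fin n → ℕ) :
    σ i j (par i (xpow X α)) =
      (p⁻¹ * ((p ^ α i - 1) / (p - 1)) * etaManin p q i j α * piManin p i α *
        lamManin q i α) • xpow X (α - Pi.single j 1) := by
  rw [hpar, map_smul, sigma_of_lt hσ hij, smul_smul]
  by_cases hi : α i = 0
  · simp [hi]
  obtain ⟨δ, rfl⟩ := exists_eq_add_single_of_ne_zero hi
  rw [add_tsub_cancel_right]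
  congr 1
  simp only [etaManin, piManin_add_single, lamManin_add_single, lambarManin_add_single,
    Pi.add_apply, Pi.single_eq_same, add_zero, Pi.single_eq_of_ne hij.ne', if_pos hij,
    if_neg hij.not_gt, lt_irrefl, if_false]
  field_simp

lemma sigma_self_partial_of_lt (hpar : IsManinPartial p q X par) (hσ : IsManinSigma p q X σ)
    (hq : q ≠ 0) (hij : i < j) (α : Fin n → ℕ) :
    σ i i (par j (xpow X α)) =
      (q⁻¹ * (p ^ α i / (p - 1)) * etaManin p q i j α * piManin p i α * lamManin q i α) •
        xpow X (α - Pi.single j 1) := by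
  rw [hpar, map_smul, sigma_self hσ, smul_smul]
  congr 1
  by_cases hj : α j = 0
  · simp [etaManin, hj]
  obtain ⟨δ, rfl⟩ := exists_eq_add_single_of_ne_zero hj
  simp only [add_tsub_cancel_right, etaManin, piManin_add_single, lamManin_add_single,
    lambarManin_add_single, Pi.add_apply, Pi.single_eq_same, add_zero, Pi.single_eq_of_ne hij.ne,
    if_pos hij, if_neg hij.not_gt, lt_irrefl, if_false]
  field_simp

end Compositions

theorem maninQuantumSpace_mixed_rel_general {K A : Type}
    [Field K] [Ring A] [Algebra K A]
    {n : ℕ} (p q : K) (hp : p ≠ 0) (hq : q ≠ 0)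
    (X : Fin n → A)
    (hspan : Submodule.span K (Set.range (xpow X)) = ⊤)
    (par : Fin n → (A →ₗ[K] A)) (σ : Fin n → Fin n → (A →ₗ[K] A))
    (hpar : ∀ l α, par l (xpow X α) =
      (piManin p l α * lamManin q l α * ((p ^ α l - 1) / (p - 1))) •
        xpow X (α - Pi.single l 1))
    (hσ : ∀ i j α, σ i j (xpow X α) = sigmaManin p q X i j α) :
    ∀ i j : Fin n, i < j →
      ((par i).comp (σ i j) - (p * q⁻¹) • ((par j).comp (σ i i)) =
        (p * q⁻¹) • ((σ i j).comp (par i)) - (σ i i).comp (par j)) ∧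
      ∀ α : Fin n → ℕ,
        par i (σ i j (xpow X α)) - (p * q⁻¹) • par j (σ i i (xpow X α)) =
          (-(q⁻¹ / (p - 1)) * etaManin p q i j α * piManin p i α * lamManin q i α) •
            xpow X (α - Pi.single j 1) ∧
        (p * q⁻¹) • σ i j (par i (xpow X α)) - σ i i (par j (xpow X α)) =
          (-(q⁻¹ / (p - 1)) * etaManin p q i j α * piManin p i α * lamManin q i α) •
            xpow X (α - Pi.single j 1) := by
  intro i j hij
  have left_side (α : Fin n → ℕ) :
      par i (σ i j (xpow X α)) - (p * q⁻¹) • par j (σ i i (xpow X α)) =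
        (-(q⁻¹ / (p - 1)) * etaManin p q i j α * piManin p i α * lamManin q i α) •
          xpow X (α - Pi.single j 1) := by
    rw [partial_sigma_of_lt hpar hσ hq hij, partial_sigma_self hpar hσ, smul_smul,
      ← sub_smul]
    congr 1
    ring
  have right_side (α : Fin n → ℕ) :
      (p * q⁻¹) • σ i j (par i (xpow X α)) - σ i i (par j (xpow X α)) =
        (-(q⁻¹ / (p - 1)) * etaManin p q i j α * piManin p i α * lamManin q i α) •
          xpow X (α - Pi.single j 1) := by
    rw [sigma_partial_of_lt hpar hσ hp hij, sigma_self_partial_of_lt hpar hσ hq hij, smul_smul,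
      ← sub_smul]
    congr 1
    field_simp
    ring
  refine ⟨LinearMap.ext_on hspan ?_, fun α => ⟨left_side α, right_side α⟩⟩
  rintro _ ⟨α, rfl⟩
  simp only [LinearMap.sub_apply, LinearMap.comp_apply, LinearMap.smul_apply]
  rw [left_side, right_side]

/-- With the two-parameter differential structure on Manin's
quantum `n`-space, for all `i < j` the identity
`∂ᵢσᵢⱼ - pq⁻¹∂ⱼσᵢᵢ = pq⁻¹σᵢⱼ∂ᵢ - σᵢᵢ∂ⱼ` holds; in fact both sides applied to
`x^α` equal `-(q⁻¹/(p-1)) ηᵢⱼ(α) πᵢ(α) λᵢ(α) x^{α-εʲ}`. -/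
theorem maninQuantumSpace_mixed_rel {K A : Type}
    [Field K] [Ring A] [Algebra K A]
    {n : ℕ} (p q : K) (hp : p ≠ 0) (hp1 : p ≠ 1) (hq : q ≠ 0)
    (X : Fin n → A)
    (hrel : ∀ i j : Fin n, i < j → X i * X j = q • (X j * X i))
    (hspan : Submodule.span K (Set.range (xpow X)) = ⊤)
    (par : Fin n → (A →ₗ[K] A)) (σ : Fin n → Fin n → (A →ₗ[K] A))
    (hpar : ∀ l α, par l (xpow X α) =
      (piManin p l α * lamManin q l α * ((p ^ α l - 1) / (p - 1))) •
        xpow X (α - Pi.single l 1))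
    (hσ : ∀ i j α, σ i j (xpow X α) = sigmaManin p q X i j α) :
    ∀ i j : Fin n, i < j →
      ((par i).comp (σ i j) - (p * q⁻¹) • ((par j).comp (σ i i)) =
        (p * q⁻¹) • ((σ i j).comp (par i)) - (σ i i).comp (par j)) ∧
      ∀ α : Fin n → ℕ,
        par i (σ i j (xpow X α)) - (p * q⁻¹) • par j (σ i i (xpow X α)) =
          (-(q⁻¹ / (p - 1)) * etaManin p q i j α * piManin p i α * lamManin q i α) •
            xpow X (α - Pi.single j 1) ∧
        (p * q⁻¹) • σ i j (par i (xpow X α)) - σ i i (par j (xpow X α)) =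
          (-(q⁻¹ / (p - 1)) * etaManin p q i j α * piManin p i α * lamManin q i α) •
            xpow X (α - Pi.single j 1) :=
  maninQuantumSpace_mixed_rel_general p q hp hq X hspan par σ hpar hσ
end
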